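/- Let W = (P, Γ, Δ, S) be a weighted pushdown system over an idempotent semiring S whose order ⊑ is total and in which extend preserves inequality, and fix c_f = p_f ε. Suppose the Kleene sequence of the finite equation system (2) stabilizes, i.e., for some k its value λ satisfies λ = ks(k) = ks(k+1) (so λ is the greatest fixed point of (2)). Define μ by: μ_{[pX_1⋯X_m]} = ⨁_{p_1,…,p_{m−1} ∈ P} (λ_{[pX_1p_1]} ⊗ λ_{[p_1X_2p_2]} ⊗ ⋯ ⊗ λ_{[p_{m−1}X_mp_f]}) for m ≥ 1, and μ_{[pε]} = 1̄ if p = p_f and 0̄ otherwise. Then μ is the greatest fixed point of the (infinite) equation system (1). (Theorem 2, positive case.) -/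

import Mathlib

universe u v w

/-- An idempotent semiring `(D, ⊕, ⊗, 0̄, 1̄)` (Definition 1). -/
structure IdemSemiring' (D : Type u) where
  add : D → D → D
  mul : D → D → D
  zero : D
  one : D
  add_assoc : ∀ a b c, add (add a b) c = add a (add b c)
  add_comm : ∀ a b, add a b = add b a
  add_zero : ∀ a, add a zero = a
  mul_assoc : ∀ a b c, mul (mul a b) c = mul a (mul b c)
  one_mul : ∀ a, mul one a = a
  mul_one : ∀ a, mul a one = a
  mul_add : ∀ a b c, mul a (add b c) = add (mul a b) (mul a c)
  add_mul : ∀ a b c, mul (add a b) c = add (mul a c) (mul b c)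
  mul_zero : ∀ a, mul a zero = zero
  zero_mul : ∀ a, mul zero a = zero
  add_idem : ∀ a, add a a = a

/-- The natural order: `a ⊑ b` iff `a ⊕ b = a` (Definition 2). -/
def IdemSemiring'.le {D : Type u} (S : IdemSemiring' D) (a b : D) : Prop :=
  S.add a b = a

/-- Extend preserves inequality: `a ≠ b → a ⊗ c ≠ b ⊗ c` for `a, b, c ≠ 0̄` (Definition 3). -/
def PreservesIneq {D : Type u} (S : IdemSemiring' D) : Prop :=
  ∀ a b c : D, a ≠ S.zero → b ≠ S.zero → c ≠ S.zero → a ≠ b → S.mul a c ≠ S.mul b c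

/-- Combine `⨁` of a list of semiring elements (`0̄` for the empty list). -/
def combineList {D : Type u} (S : IdemSemiring' D) (l : List D) : D :=
  l.foldr S.add S.zero

/-- Extend `⨂` of a list of semiring elements (`1̄` for the empty list). -/
def prodList {D : Type u} (S : IdemSemiring' D) (l : List D) : D :=
  l.foldr S.mul S.one

/-- A rule `pX —d→ qα` of a weighted pushdown system. -/
structure PDSRule (P : Type v) (Γ : Type w) (D : Type u) where
  p : P
  X : Γ
  d : D
  q : P
  α : List Γ

/-- A configuration `pγ`. -/
abbrev PDSConfig (P : Type v) (Γ : Type w) := P × List Γ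

/-- One step using rule `r` : `pXγ ⟶ᵣ qαγ`. -/
def StepBy {P : Type v} {Γ : Type w} {D : Type u} (r : PDSRule P Γ D)
    (c c' : PDSConfig P Γ) : Prop :=
  ∃ γ : List Γ, c = (r.p, r.X :: γ) ∧ c' = (r.q, r.α ++ γ)

/-- `Steps σ c c'` : the rule sequence `σ` leads from `c` to `c'`. -/
def Steps {P : Type v} {Γ : Type w} {D : Type u} :
    List (PDSRule P Γ D) → PDSConfig P Γ → PDSConfig P Γ → Prop
  | [], c, c' => c = c'
  | r :: σ, c, c' => ∃ c'', StepBy r c c'' ∧ Steps σ c'' c'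

/-- The weight `v(σ) = d_{r₁} ⊗ ⋯ ⊗ d_{r_n}` of a rule sequence (with `v(ε) = 1̄`). -/
def seqWeight {P : Type v} {Γ : Type w} {D : Type u} (S : IdemSemiring' D)
    (σ : List (PDSRule P Γ D)) : D :=
  σ.foldr (fun r acc => S.mul r.d acc) S.one

/-- Applies rule `r` to configuration `c`, if possible. -/
def applyRule? {P : Type v} {Γ : Type w} {D : Type u} [DecidableEq P] [DecidableEq Γ]
    (r : PDSRule P Γ D) (c : PDSConfig P Γ) : Option (PDSConfig P Γ) :=
  match c.2 with
  | [] => none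
  | X :: γ => if r.p = c.1 ∧ r.X = X then some (r.q, r.α ++ γ) else none

/-- `I(c)` : `1̄` if `c = c_f` and `0̄` otherwise. -/
def Ifun {P : Type v} {Γ : Type w} {D : Type u} [DecidableEq P] [DecidableEq Γ]
    (S : IdemSemiring' D) (cf c : PDSConfig P Γ) : D :=
  if c = cf then S.one else S.zero

/-- Right-hand side of equation system (1): `[c] = I(c) ⊕ ⨁_{c ⟶ᵣ c'} (d_r ⊗ [c'])`. -/
def rhs1 {P : Type v} {Γ : Type w} {D : Type u} [DecidableEq P] [DecidableEq Γ]
    (S : IdemSemiring' D) (Δ : List (PDSRule P Γ D)) (cf : PDSConfig P Γ)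
    (g : PDSConfig P Γ → D) (c : PDSConfig P Γ) : D :=
  S.add (Ifun S cf c)
    (Δ.foldr (fun r acc =>
      S.add (match applyRule? r c with
             | some c' => S.mul r.d (g c')
             | none => S.zero) acc) S.zero)

/-- The Kleene sequence of equation system (1), starting from the all-`0̄` assignment. -/
def ks1 {P : Type v} {Γ : Type w} {D : Type u} [DecidableEq P] [DecidableEq Γ]
    (S : IdemSemiring' D) (Δ : List (PDSRule P Γ D)) (cf : PDSConfig P Γ) :
    ℕ → PDSConfig P Γ → D
  | 0 => fun _ => S.zero
  | k + 1 => rhs1 S Δ cf (ks1 S Δ cf k)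

/-- Right-hand side of equation system (2) for the pop-sequence variables `[pXq]` :
`[pXq] = ⨁_{pX—d→qε} d ⊕ ⨁_{pX—d→rY} (d ⊗ [rYq]) ⊕ ⨁_{pX—d→rYZ} (d ⊗ ⨁_{s} ([rYs] ⊗ [sZq]))`. -/
noncomputable def rhs2 {P : Type v} {Γ : Type w} {D : Type u}
    [Fintype P] [DecidableEq P] [DecidableEq Γ]
    (S : IdemSemiring' D) (Δ : List (PDSRule P Γ D))
    (g : P × Γ × P → D) : P × Γ × P → D :=
  fun x =>
    match x with
    | (p, X, q) =>
      Δ.foldr (fun r acc =>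
        S.add
          (if r.p = p ∧ r.X = X then
            match r.α with
            | [] => if r.q = q then r.d else S.zero
            | [Y] => S.mul r.d (g (r.q, Y, q))
            | [Y, Z] =>
                S.mul r.d
                  (combineList S ((Finset.univ : Finset P).toList.map
                    (fun s => S.mul (g (r.q, Y, s)) (g (s, Z, q)))))
            | _ => S.zero
           else S.zero)
          acc) S.zero

/-- The Kleene sequence of equation system (2), starting from the all-`0̄` assignment. -/
noncomputable def ks2 {P : Type v} {Γ : Type w} {D : Type u}
    [Fintype P] [DecidableEq P] [DecidableEq Γ]
    (S : IdemSemiring' D) (Δ : List (PDSRule P Γ D)) :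
    ℕ → P × Γ × P → D
  | 0 => fun _ => S.zero
  | k + 1 => rhs2 S Δ (ks2 S Δ k)

/-- `σ` is a pop sequence for `(p, X, q)` over the rules `Δ` : `pX ⟶_σ qε`. -/
def PopSeq {P : Type v} {Γ : Type w} {D : Type u}
    (Δ σ : List (PDSRule P Γ D)) (p : P) (X : Γ) (q : P) : Prop :=
  (∀ r ∈ σ, r ∈ Δ) ∧ Steps σ (p, [X]) (q, ([] : List Γ))

/-- The vector `μ` of equation (3), built from a solution `lam` of equation system (2):
`μ_{[pX₁⋯X_m]} = ⨁_{p₁,…,p_{m−1}} (lam[pX₁p₁] ⊗ lam[p₁X₂p₂] ⊗ ⋯ ⊗ lam[p_{m−1}X_mp_f])`,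
the combine ranging over all tuples of intermediate control states; in particular
`μ_{[pε]} = 1̄` if `p = p_f` and `0̄` otherwise. -/
noncomputable def muDef {P : Type v} {Γ : Type w} {D : Type u} [Fintype P] [DecidableEq P]
    (S : IdemSemiring' D) (lam : P × Γ × P → D) (pf : P) (c : PDSConfig P Γ) : D :=
  combineList S
    ((((Finset.univ : Finset (Fin (c.2.length + 1) → P)).filter
        (fun ps => ps 0 = c.1 ∧ ps (Fin.last c.2.length) = pf)).toList).map
      (fun ps => prodList S (List.ofFn (fun i : Fin c.2.length =>
        lam (ps i.castSucc, c.2.get i, ps i.succ)))))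

/-!
Write `μ_q(pα)` for `muDef λ q (p, α)`, so that `μ = μ_{p_f}`. These sums are multiplicative
along words: `μ_q(p, αγ) = ⨁_s μ_s(p, α) ⊗ μ_q(s, γ)`. Since `λ` solves (2), unfolding `λ[pXs]` in
`μ(pXγ) = ⨁_s λ[pXs] ⊗ μ(sγ)` turns it into `⨁_{pX —d→ qα} d ⊗ μ(qαγ)`, the right-hand side
of (1) at `pXγ`; so `μ` is a fixed point of (1) for every solution `λ` of (2).

Every fixed point of (1) lies below every Kleene iterate `ks1 n`, so it suffices to find, for each
configuration `c`, an `N` with `ks1 N c ⊑ μ c`. By induction on `n`,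
`ks1 (3ⁿ + M) (pXγ) ⊑ ks2 n [pXq] ⊗ ks1 M (qγ)`: a rule `pX —d→ qα` costs one step and leaves at
most two symbols, each of which is handled within `3ⁿ` steps. Iterating this along the stack gives
`ks1 (|γ|·3ᵏ + 1) (pγ) ⊑ μ(pγ)`.
-/

namespace IdemSemiring'

variable {D : Type u} (S : IdemSemiring' D)

theorem le_refl (a : D) : S.le a a := S.add_idem a

theorem le_trans {a b c : D} (hab : S.le a b) (hbc : S.le b c) : S.le a c := by
  unfold IdemSemiring'.le at *
  rw [← hab, S.add_assoc, hbc]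

theorem le_antisymm {a b : D} (hab : S.le a b) (hba : S.le b a) : a = b :=
  hab.symm.trans ((S.add_comm a b).trans hba)

theorem le_zero (a : D) : S.le a S.zero := S.add_zero a

theorem eq_of_forall_le_iff {a b : D} (h : ∀ x, S.le x a ↔ S.le x b) : a = b :=
  S.le_antisymm ((h a).1 (S.le_refl a)) ((h b).2 (S.le_refl b))

theorem le_add_iff {x a b : D} : S.le x (S.add a b) ↔ S.le x a ∧ S.le x b := by
  have add_le_left : S.le (S.add a b) a := by
    show S.add (S.add a b) a = S.add a b
    rw [S.add_comm a b, S.add_assoc, S.add_idem]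
  have add_le_right : S.le (S.add a b) b := by
    show S.add (S.add a b) b = S.add a b
    rw [S.add_assoc, S.add_idem]
  refine ⟨fun h => ⟨S.le_trans h add_le_left, S.le_trans h add_le_right⟩, fun ⟨ha, hb⟩ => ?_⟩
  show S.add x (S.add a b) = x
  rw [← S.add_assoc, ha, hb]

theorem add_le_add {a b c d : D} (hab : S.le a b) (hcd : S.le c d) :
    S.le (S.add a c) (S.add b d) := by
  show S.add (S.add a c) (S.add b d) = S.add a c
  rw [S.add_assoc, ← S.add_assoc c, S.add_comm c b, S.add_assoc, hcd, ← S.add_assoc, hab]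

theorem mul_le_mul_left (a : D) {b c : D} (h : S.le b c) : S.le (S.mul a b) (S.mul a c) := by
  show S.add (S.mul a b) (S.mul a c) = S.mul a b
  rw [← S.mul_add, h]

theorem ite_zero_mul (p : Prop) [Decidable p] (a b : D) :
    S.mul (if p then a else S.zero) b = if p then S.mul a b else S.zero := by
  split_ifs
  · rfl
  · exact S.zero_mul b

theorem mul_ite_zero (p : Prop) [Decidable p] (a b : D) :
    S.mul a (if p then b else S.zero) = if p then S.mul a b else S.zero := by
  split_ifs
  · rfl
  · exact S.mul_zero a

end IdemSemiring'

section combineList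

variable {D : Type u} {S : IdemSemiring' D} {α : Type*}

@[simp]
theorem combineList_cons (a : D) (l : List D) :
    combineList S (a :: l) = S.add a (combineList S l) := rfl

theorem combineList_map_le {l : List α} {f g : α → D} (h : ∀ a ∈ l, S.le (f a) (g a)) :
    S.le (combineList S (l.map f)) (combineList S (l.map g)) := by
  induction l with
  | nil => exact S.le_refl _
  | cons a l ih => exact S.add_le_add (h a (by simp)) (ih fun b hb => h b (by simp [hb]))

theorem combineList_map_zero (l : List α) : combineList S (l.map fun _ => S.zero) = S.zero := by
  induction l with
  | nil => rfl
  | cons a l ih => rw [List.map_cons, combineList_cons, ih, S.add_idem]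

theorem foldr_add_eq_combineList (f : α → D) (l : List α) :
    l.foldr (fun a acc => S.add (f a) acc) S.zero = combineList S (l.map f) := by
  simp [combineList, List.foldr_map]

theorem le_combineList_iff {x : D} {l : List D} :
    S.le x (combineList S l) ↔ ∀ y ∈ l, S.le x y := by
  induction l with
  | nil => exact iff_of_true (S.le_zero x) (by simp)
  | cons a l ih => simp [S.le_add_iff, ih]

theorem combineList_le_of_mem {y : D} {l : List D} (h : y ∈ l) : S.le (combineList S l) y :=
  le_combineList_iff.1 (S.le_refl _) y h

theorem mul_combineList (a : D) (l : List α) (f : α → D) :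
    S.mul a (combineList S (l.map f)) = combineList S (l.map fun x => S.mul a (f x)) := by
  induction l with
  | nil => exact S.mul_zero a
  | cons b l ih => rw [List.map_cons, combineList_cons, S.mul_add, ih]; rfl

theorem combineList_mul (l : List α) (f : α → D) (a : D) :
    S.mul (combineList S (l.map f)) a = combineList S (l.map fun x => S.mul (f x) a) := by
  induction l with
  | nil => exact S.zero_mul a
  | cons b l ih => rw [List.map_cons, combineList_cons, S.add_mul, ih]; rfl

theorem combineList_comm {β : Type*} (l₁ : List α) (l₂ : List β) (f : α → β → D) :
    combineList S (l₁.map fun a => combineList S (l₂.map (f a))) =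
      combineList S (l₂.map fun b => combineList S (l₁.map fun a => f a b)) :=
  S.eq_of_forall_le_iff fun x => by
    simp only [le_combineList_iff, List.forall_mem_map]
    exact forall₂_comm

theorem combineList_map_ite_eq [DecidableEq α] {l : List α} {a : α} (ha : a ∈ l) (f : α → D) :
    combineList S (l.map fun b => if b = a then f b else S.zero) = f a :=
  S.eq_of_forall_le_iff fun x => by
    simp only [le_combineList_iff, List.forall_mem_map]
    refine ⟨fun h => by simpa using h a ha, fun h b _ => ?_⟩
    split_ifs with hb
    · exact hb ▸ h
    · exact S.le_zero x

end combineList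

section muDef

variable {D : Type u} {P : Type v} {Γ : Type w} [Fintype P] [DecidableEq P]
  {S : IdemSemiring' D} {lam : P × Γ × P → D}

theorem le_mul_muDef_iff {x a : D} {pf p : P} {γ : List Γ} :
    S.le x (S.mul a (muDef S lam pf (p, γ))) ↔ ∀ ps : Fin (γ.length + 1) → P, ps 0 = p →
      ps (Fin.last γ.length) = pf →
        S.le x (S.mul a (prodList S (List.ofFn fun i : Fin γ.length =>
          lam (ps i.castSucc, γ.get i, ps i.succ)))) := by
  simp only [muDef, mul_combineList, le_combineList_iff, List.forall_mem_map, Finset.mem_toList,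
    Finset.mem_filter, Finset.mem_univ, true_and, and_imp]

theorem le_muDef_iff {x : D} {pf p : P} {γ : List Γ} :
    S.le x (muDef S lam pf (p, γ)) ↔ ∀ ps : Fin (γ.length + 1) → P, ps 0 = p →
      ps (Fin.last γ.length) = pf →
        S.le x (prodList S (List.ofFn fun i : Fin γ.length =>
          lam (ps i.castSucc, γ.get i, ps i.succ))) := by
  simpa only [S.one_mul] using le_mul_muDef_iff (S := S) (a := S.one)

theorem muDef_nil (pf p : P) :
    muDef S lam pf (p, ([] : List Γ)) = if p = pf then S.one else S.zero := by
  refine S.eq_of_forall_le_iff fun x => ?_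
  rw [le_muDef_iff]
  split_ifs with h
  · exact ⟨fun hx => hx (fun _ => p) rfl h, fun hx _ _ _ => hx⟩
  · refine iff_of_true (fun ps h0 hlast => absurd (h0.symm.trans hlast) h) (S.le_zero x)

theorem muDef_cons (pf p : P) (X : Γ) (γ : List Γ) :
    muDef S lam pf (p, X :: γ) =
      combineList S ((Finset.univ : Finset P).toList.map fun q =>
        S.mul (lam (p, X, q)) (muDef S lam pf (q, γ))) := by
  refine S.eq_of_forall_le_iff fun x => ?_
  simp only [le_muDef_iff, le_combineList_iff, List.forall_mem_map, Finset.mem_toList,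
    Finset.mem_univ, true_implies, le_mul_muDef_iff]
  rw [Fin.forall_fin_succ_pi]
  simp [List.ofFn_succ, prodList]
  exact ⟨fun h q ps h0 hl => h0 ▸ h p ps rfl hl, fun h a ps ha hl => ha ▸ h _ ps rfl hl⟩

theorem muDef_singleton (pf p : P) (X : Γ) : muDef S lam pf (p, [X]) = lam (p, X, pf) := by
  simp_rw [muDef_cons, muDef_nil, S.mul_ite_zero, S.mul_one]
  exact combineList_map_ite_eq (Finset.mem_toList.2 (Finset.mem_univ pf)) _

theorem muDef_pair (pf p : P) (X Y : Γ) :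
    muDef S lam pf (p, [X, Y]) = combineList S ((Finset.univ : Finset P).toList.map fun q =>
      S.mul (lam (p, X, q)) (lam (q, Y, pf))) := by
  simp_rw [muDef_cons (γ := [Y]), muDef_singleton]

theorem muDef_append (pf p : P) (α γ : List Γ) :
    muDef S lam pf (p, α ++ γ) = combineList S ((Finset.univ : Finset P).toList.map fun q =>
      S.mul (muDef S lam q (p, α)) (muDef S lam pf (q, γ))) := by
  induction α generalizing p with
  | nil =>
    simp_rw [List.nil_append, muDef_nil, S.ite_zero_mul, S.one_mul, @eq_comm _ p]
    exact (combineList_map_ite_eq (Finset.mem_toList.2 (Finset.mem_univ p))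
      fun q => muDef S lam pf (q, γ)).symm
  | cons X α ih =>
    simp_rw [List.cons_append, muDef_cons, ih, mul_combineList, combineList_mul, S.mul_assoc]
    exact combineList_comm _ _ _

theorem le_muDef_mul_of_cons {f : ℕ → PDSConfig P Γ → D} {L : ℕ} (hcons : ∀ p X q γ M,
      S.le (f (L + M) (p, X :: γ)) (S.mul (lam (p, X, q)) (f M (q, γ))))
    (α γ : List Γ) (p q : P) (M : ℕ) :
    S.le (f (α.length * L + M) (p, α ++ γ)) (S.mul (muDef S lam q (p, α)) (f M (q, γ))) := by
  induction α generalizing p with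
  | nil =>
    rw [muDef_nil, S.ite_zero_mul, S.one_mul, List.length_nil, Nat.zero_mul, Nat.zero_add,
      List.nil_append]
    split_ifs with hpq
    · exact hpq ▸ S.le_refl _
    · exact S.le_zero _
  | cons X α ih =>
    rw [muDef_cons, combineList_mul, List.cons_append, List.length_cons,
      show (α.length + 1) * L + M = L + (α.length * L + M) by ring]
    refine le_combineList_iff.2 (List.forall_mem_map.2 fun s _ => ?_)
    rw [S.mul_assoc]
    exact S.le_trans (hcons p X s _ _) (S.mul_le_mul_left _ (ih s))

end muDef

section equations

variable {D : Type u} {P : Type v} {Γ : Type w} [DecidableEq P] [DecidableEq Γ]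
  {S : IdemSemiring' D} {Δ : List (PDSRule P Γ D)}

theorem rhs1_nil (cf : PDSConfig P Γ) (g : PDSConfig P Γ → D) (p : P) :
    rhs1 S Δ cf g (p, []) = Ifun S cf (p, []) := by
  refine S.eq_of_forall_le_iff fun x => ?_
  simp [rhs1, foldr_add_eq_combineList, S.le_add_iff, le_combineList_iff, applyRule?, S.le_zero]

theorem rhs1_cons (pf : P) (g : PDSConfig P Γ → D) (p : P) (X : Γ) (γ : List Γ) :
    rhs1 S Δ (pf, []) g (p, X :: γ) = combineList S (Δ.map fun r =>
      if r.p = p ∧ r.X = X then S.mul r.d (g (r.q, r.α ++ γ)) else S.zero) := by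
  rw [rhs1, foldr_add_eq_combineList, Ifun, if_neg (by simp), S.add_comm, S.add_zero]
  refine congrArg _ (List.map_congr_left fun r _ => ?_)
  simp only [applyRule?]
  split_ifs <;> rfl

theorem rhs2_eq [Fintype P] (hΔ : ∀ r ∈ Δ, r.α.length ≤ 2) (g : P × Γ × P → D)
    (p : P) (X : Γ) (q : P) :
    rhs2 S Δ g (p, X, q) = combineList S (Δ.map fun r =>
      if r.p = p ∧ r.X = X then S.mul r.d (muDef S g q (r.q, r.α)) else S.zero) := by
  rw [rhs2, foldr_add_eq_combineList]
  refine congrArg _ (List.map_congr_left fun r hr => ?_)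
  by_cases hmatch : r.p = p ∧ r.X = X
  · have hlen := hΔ r hr
    simp only [hmatch, and_self, if_true]
    rcases hα : r.α with _ | ⟨Y, _ | ⟨Z, _ | _⟩⟩
    · simp [muDef_nil, S.mul_ite_zero, S.mul_one]
    · simp [muDef_singleton]
    · simp [muDef_pair]
    · simp [hα] at hlen
  · simp only [hmatch, if_false]

theorem isFixedPt_rhs1_muDef [Fintype P] (hΔ : ∀ r ∈ Δ, r.α.length ≤ 2) {lam : P × Γ × P → D}
    (hlam : Function.IsFixedPt (rhs2 S Δ) lam) (pf : P) :
    Function.IsFixedPt (rhs1 S Δ (pf, [])) (muDef S lam pf) := by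
  funext ⟨p, γ⟩
  cases γ with
  | nil => simp [rhs1_nil, muDef_nil, Ifun]
  | cons X γ =>
    have hmatch : ∀ r : PDSRule P Γ D,
        (if r.p = p ∧ r.X = X then S.mul r.d (muDef S lam pf (r.q, r.α ++ γ)) else S.zero) =
          combineList S ((Finset.univ : Finset P).toList.map fun s =>
            S.mul (if r.p = p ∧ r.X = X then S.mul r.d (muDef S lam s (r.q, r.α)) else S.zero)
              (muDef S lam pf (s, γ))) := by
      intro r
      split_ifs
      · simp_rw [muDef_append, mul_combineList, S.mul_assoc]
      · simp_rw [S.zero_mul, combineList_map_zero]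
    have hlam' : ∀ s, lam (p, X, s) = combineList S (Δ.map fun r =>
        if r.p = p ∧ r.X = X then S.mul r.d (muDef S lam s (r.q, r.α)) else S.zero) :=
      fun s => (congrFun hlam _).symm.trans (rhs2_eq hΔ lam p X s)
    rw [rhs1_cons, muDef_cons]
    simp_rw [hmatch, hlam', combineList_mul]
    exact combineList_comm _ _ _

end equations

section kleene

variable {D : Type u} {P : Type v} {Γ : Type w} [DecidableEq P] [DecidableEq Γ]
  {S : IdemSemiring' D} {Δ : List (PDSRule P Γ D)}

theorem rhs1_mono {cf : PDSConfig P Γ} {g h : PDSConfig P Γ → D} (hgh : ∀ c, S.le (g c) (h c))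
    (c : PDSConfig P Γ) : S.le (rhs1 S Δ cf g c) (rhs1 S Δ cf h c) := by
  rw [rhs1, rhs1, foldr_add_eq_combineList, foldr_add_eq_combineList]
  refine S.add_le_add (S.le_refl _) (combineList_map_le fun r _ => ?_)
  split
  · exact S.mul_le_mul_left _ (hgh _)
  · exact S.le_refl _

theorem ks1_succ_le (cf : PDSConfig P Γ) (n : ℕ) (c : PDSConfig P Γ) :
    S.le (ks1 S Δ cf (n + 1) c) (ks1 S Δ cf n c) := by
  induction n generalizing c with
  | zero => exact S.le_zero _
  | succ n ih => exact rhs1_mono ih c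

theorem ks1_antitone {cf : PDSConfig P Γ} {m n : ℕ} (hmn : m ≤ n) (c : PDSConfig P Γ) :
    S.le (ks1 S Δ cf n c) (ks1 S Δ cf m c) := by
  induction n, hmn using Nat.le_induction with
  | base => exact S.le_refl _
  | succ n _ ih => exact S.le_trans (ks1_succ_le cf n c) ih

theorem le_ks1_of_isFixedPt {cf : PDSConfig P Γ} {g : PDSConfig P Γ → D}
    (hg : Function.IsFixedPt (rhs1 S Δ cf) g) (n : ℕ) (c : PDSConfig P Γ) :
    S.le (g c) (ks1 S Δ cf n c) := by
  induction n generalizing c with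
  | zero => exact S.le_zero _
  | succ n ih =>
    have h := rhs1_mono (Δ := Δ) (cf := cf) ih c
    rwa [hg.eq] at h

theorem ks1_succ_le_mul (pf : P) {r : PDSRule P Γ D} (hr : r ∈ Δ) (n : ℕ) (γ : List Γ) :
    S.le (ks1 S Δ (pf, []) (n + 1) (r.p, r.X :: γ))
      (S.mul r.d (ks1 S Δ (pf, []) n (r.q, r.α ++ γ))) := by
  rw [ks1, rhs1_cons]
  refine S.le_trans (combineList_le_of_mem (List.mem_map_of_mem hr)) ?_
  simp only [and_self, if_true]
  exact S.le_refl _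

theorem ks1_cons_le_ks2_mul [Fintype P] (hΔ : ∀ r ∈ Δ, r.α.length ≤ 2) (pf : P) (n : ℕ)
    (p : P) (X : Γ) (q : P) (γ : List Γ) (M : ℕ) :
    S.le (ks1 S Δ (pf, []) (3 ^ n + M) (p, X :: γ))
      (S.mul (ks2 S Δ n (p, X, q)) (ks1 S Δ (pf, []) M (q, γ))) := by
  induction n generalizing p X q γ M with
  | zero => exact (S.zero_mul _).symm ▸ S.le_zero _
  | succ n ih =>
    obtain ⟨N, hN, hle⟩ : ∃ N, 3 ^ (n + 1) + M = N + 1 ∧ 2 * 3 ^ n + M ≤ N :=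
      ⟨3 ^ (n + 1) + M - 1, by have := Nat.one_le_pow n 3 (by norm_num); rw [pow_succ]; omega⟩
    rw [ks2, rhs2_eq hΔ, combineList_mul, hN]
    refine le_combineList_iff.2 (List.forall_mem_map.2 fun r hr => ?_)
    rw [S.ite_zero_mul]
    split_ifs with hmatch
    · obtain ⟨rfl, rfl⟩ := hmatch
      have hlen : r.α.length * 3 ^ n + M ≤ N :=
        le_trans (Nat.add_le_add_right (Nat.mul_le_mul_right _ (hΔ r hr)) M) hle
      rw [S.mul_assoc]
      exact S.le_trans (ks1_succ_le_mul pf hr N γ) (S.mul_le_mul_left _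
        (S.le_trans (ks1_antitone hlen _) (le_muDef_mul_of_cons ih r.α γ r.q q M)))
    · exact S.le_zero _

theorem ks1_le_muDef_ks2 [Fintype P] (hΔ : ∀ r ∈ Δ, r.α.length ≤ 2) (pf : P) (k : ℕ)
    (c : PDSConfig P Γ) :
    S.le (ks1 S Δ (pf, []) (c.2.length * 3 ^ k + 1) c) (muDef S (ks2 S Δ k) pf c) := by
  have hcf : ks1 S Δ (pf, []) 1 (pf, []) = S.one := by simp [ks1, rhs1_nil, Ifun]
  simpa [hcf, S.mul_one] using
    le_muDef_mul_of_cons (ks1_cons_le_ks2_mul (S := S) hΔ pf k) c.2 [] c.1 pf 1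

end kleene

theorem mu_is_gfp_of_eq1_general {P : Type v} {Γ : Type w} {D : Type u}
    [Fintype P] [DecidableEq P] [DecidableEq Γ]
    (S : IdemSemiring' D)
    (Δ : List (PDSRule P Γ D)) (hΔ : ∀ r ∈ Δ, r.α.length ≤ 2) (pf : P)
    (k : ℕ) (hstab : ks2 S Δ k = ks2 S Δ (k + 1)) :
    (∀ c : PDSConfig P Γ,
      rhs1 S Δ (pf, ([] : List Γ)) (muDef S (ks2 S Δ k) pf) c = muDef S (ks2 S Δ k) pf c) ∧
    (∀ g : PDSConfig P Γ → D, (∀ c, rhs1 S Δ (pf, ([] : List Γ)) g c = g c) →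
      ∀ c, S.le (g c) (muDef S (ks2 S Δ k) pf c)) := by
  have hlam : Function.IsFixedPt (rhs2 S Δ) (ks2 S Δ k) := hstab.symm
  refine ⟨congrFun (isFixedPt_rhs1_muDef hΔ hlam pf), fun g hg c => ?_⟩
  exact S.le_trans (le_ks1_of_isFixedPt (funext hg) _ c) (ks1_le_muDef_ks2 hΔ pf k c)

/-- Theorem 2, positive case: if the Kleene sequence of the finite equation system (2)
stabilizes at `λ = ks(k) = ks(k+1)`, then the vector `μ` defined by equation (3) from `λ`
is the greatest fixed point of the infinite equation system (1). -/
theorem mu_is_gfp_of_eq1 {P : Type v} {Γ : Type w} {D : Type u}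
    [Fintype P] [DecidableEq P] [Fintype Γ] [DecidableEq Γ]
    (S : IdemSemiring' D) (htot : ∀ a b : D, S.le a b ∨ S.le b a) (hpi : PreservesIneq S)
    (Δ : List (PDSRule P Γ D)) (hΔ : ∀ r ∈ Δ, r.α.length ≤ 2) (pf : P)
    (k : ℕ) (hstab : ks2 S Δ k = ks2 S Δ (k + 1)) :
    (∀ c : PDSConfig P Γ,
      rhs1 S Δ (pf, ([] : List Γ)) (muDef S (ks2 S Δ k) pf) c = muDef S (ks2 S Δ k) pf c) ∧
    (∀ g : PDSConfig P Γ → D, (∀ c, rhs1 S Δ (pf, ([] : List Γ)) g c = g c) →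
      ∀ c, S.le (g c) (muDef S (ks2 S Δ k) pf c)) :=
  mu_is_gfp_of_eq1_general S Δ hΔ pf k hstab
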